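/- Every bridge of a distance graph D belongs to its distance backbone B^g, for any td-norm g. That is, if deleting the edge (i,j) disconnects nodes i and j, then d_{ij} = d^{T,g}_{ij}, so the edge is in the backbone. -/

import Mathlib

open scoped ENNReal

variable {X : Type*}

/-- The `g`-length of the path `i, k₁, ..., kₘ, j` in the distance graph `d`. -/
def pathLen (g : ℝ≥0∞ → ℝ≥0∞ → ℝ≥0∞) (d : X → X → ℝ≥0∞) : X → List X → X → ℝ≥0∞
  | i, [], j => d i j
  | i, k :: ks, j => g (d i k) (pathLen g d k ks j)

/-- The shortest-path distance closure `d^{T,g}`: infimum of `g`-lengths over all paths. -/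
noncomputable def dClosure (g : ℝ≥0∞ → ℝ≥0∞ → ℝ≥0∞) (d : X → X → ℝ≥0∞) (i j : X) : ℝ≥0∞ :=
  ⨅ p : List X, pathLen g d i p j

/-!
A td-norm dominates both of its arguments, so the `g`-length of a path is at least the weight of
each of its edges. If `(i, j)` is a bridge, every path from `i` to `j` must use either the edge
`(i, j)` itself or an edge of weight `⊤`; either way its length is at least `d i j`.
-/

section TdNorm

variable {g : ℝ≥0∞ → ℝ≥0∞ → ℝ≥0∞}

theorem left_le_apply (hmono : ∀ a b c e, a ≤ c → b ≤ e → g a b ≤ g c e)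
    (hid : ∀ a, g a 0 = a) (a b : ℝ≥0∞) : a ≤ g a b :=
  calc a = g a 0 := (hid a).symm
    _ ≤ g a b := hmono a 0 a b le_rfl zero_le

theorem right_le_apply (hcomm : ∀ a b, g a b = g b a)
    (hmono : ∀ a b c e, a ≤ c → b ≤ e → g a b ≤ g c e)
    (hid : ∀ a, g a 0 = a) (a b : ℝ≥0∞) : b ≤ g a b :=
  hcomm b a ▸ left_le_apply hmono hid b a

variable {d : X → X → ℝ≥0∞} {R : X → X → Prop} {c : ℝ≥0∞}

theorem le_pathLen_of_not_reflTransGen (hleft : ∀ a b, a ≤ g a b) (hright : ∀ a b, b ≤ g a b)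
    (hc : ∀ u v, ¬ R u v → c ≤ d u v) {j : X} :
    ∀ (p : List X) {u : X}, ¬ Relation.ReflTransGen R u j → c ≤ pathLen g d u p j
  | [], u, hu => hc u j fun h => hu (.single h)
  | k :: ks, u, hu => by
    by_cases huk : R u k
    · have hk : ¬ Relation.ReflTransGen R k j := fun h => hu (.head huk h)
      exact (le_pathLen_of_not_reflTransGen hleft hright hc ks hk).trans (hright _ _)
    · exact (hc u k huk).trans (hleft _ _)

theorem le_dClosure_of_not_reflTransGen (hleft : ∀ a b, a ≤ g a b) (hright : ∀ a b, b ≤ g a b)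
    (hc : ∀ u v, ¬ R u v → c ≤ d u v) {i j : X} (hij : ¬ Relation.ReflTransGen R i j) :
    c ≤ dClosure g d i j :=
  le_iInf fun p => le_pathLen_of_not_reflTransGen hleft hright hc p hij

end TdNorm

theorem dClosure_le (g : ℝ≥0∞ → ℝ≥0∞ → ℝ≥0∞) (d : X → X → ℝ≥0∞) (i j : X) :
    dClosure g d i j ≤ d i j :=
  iInf_le (fun p => pathLen g d i p j) []

theorem backbone_contains_bridges_general
    (d : X → X → ℝ≥0∞) (hsymm : ∀ i j, d i j = d j i)
    (g : ℝ≥0∞ → ℝ≥0∞ → ℝ≥0∞)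
    (hcomm : ∀ a b, g a b = g b a)
    (hmono : ∀ a b c e, a ≤ c → b ≤ e → g a b ≤ g c e)
    (hid : ∀ a, g a 0 = a)
    (i j : X)
    (hbridge : ¬ Relation.ReflTransGen
      (fun u v => d u v ≠ ⊤ ∧ ¬ ((u = i ∧ v = j) ∨ (u = j ∧ v = i))) i j) :
    d i j = dClosure g d i j := by
  have hoff_bridge : ∀ u v, ¬ (d u v ≠ ⊤ ∧ ¬ ((u = i ∧ v = j) ∨ (u = j ∧ v = i))) →
      d i j ≤ d u v := by
    intro u v huv
    rcases not_and_or.mp huv with htop | hij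
    · rw [not_not.mp htop]
      exact le_top
    · rcases not_not.mp hij with ⟨rfl, rfl⟩ | ⟨rfl, rfl⟩
      · exact le_rfl
      · exact (hsymm v u).le
  exact le_antisymm
    (le_dClosure_of_not_reflTransGen (left_le_apply hmono hid)
      (right_le_apply hcomm hmono hid) hoff_bridge hbridge)
    (dClosure_le g d i j)

/-- **Backbone Contains All Bridges.** If the edge `(i,j)` is a bridge — deleting it
disconnects `i` from `j` — then the edge belongs to the distance backbone for any
td-norm `g`: `d i j = d^{T,g} i j`. -/
theorem backbone_contains_bridges [Fintype X]
    (d : X → X → ℝ≥0∞) (hsymm : ∀ i j, d i j = d j i) (hrefl : ∀ i, d i i = 0)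
    (g : ℝ≥0∞ → ℝ≥0∞ → ℝ≥0∞)
    (hcomm : ∀ a b, g a b = g b a)
    (hassoc : ∀ a b c, g a (g b c) = g (g a b) c)
    (hmono : ∀ a b c e, a ≤ c → b ≤ e → g a b ≤ g c e)
    (hid : ∀ a, g a 0 = a)
    (i j : X) (hedge : d i j ≠ ⊤)
    (hbridge : ¬ Relation.ReflTransGen
      (fun u v => d u v ≠ ⊤ ∧ ¬ ((u = i ∧ v = j) ∨ (u = j ∧ v = i))) i j) :
    d i j = dClosure g d i j :=
  backbone_contains_bridges_general d hsymm g hcomm hmono hid i j hbridge
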